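/- arXiv:math/0005114 — 2 statements merged into one kernel-verified Lean document; each statement's English description precedes it below -/
import Mathlib

section
/- The one-relator group L = ⟨x, y | x y² x = y x² y⟩ is isomorphic to the one-relator group ⟨t, z | z·(t⁻¹ z t) = (t⁻¹ z t)·z⟩, i.e., to ⟨t, z | [z, z^t] = 1⟩ where z^t = t⁻¹ z t. -/
noncomputable section

/-- The relator `x y² x (y x² y)⁻¹` in the free group on `{x, y}`
(`x = FreeGroup.of false`, `y = FreeGroup.of true`). -/
def relL : FreeGroup Bool :=
  FreeGroup.of false * FreeGroup.of true ^ 2 * FreeGroup.of false *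
    (FreeGroup.of true * FreeGroup.of false ^ 2 * FreeGroup.of true)⁻¹

/-- The one-relator group `L = ⟨x, y | x y² x = y x² y⟩`. -/
abbrev Lgroup : Type := PresentedGroup ({relL} : Set (FreeGroup Bool))

/-- The relator `[z, z^t] = z (t⁻¹ z t) ((t⁻¹ z t) z)⁻¹` in the free group on `{t, z}`
(`t = FreeGroup.of false`, `z = FreeGroup.of true`). -/
def relT : FreeGroup Bool :=
  FreeGroup.of true * ((FreeGroup.of false)⁻¹ * FreeGroup.of true * FreeGroup.of false) *
    (((FreeGroup.of false)⁻¹ * FreeGroup.of true * FreeGroup.of false) * FreeGroup.of true)⁻¹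

/-!
The substitution `x = t`, `y = t⁻¹ z` (inverse: `t = x`, `z = x y`) is an automorphism of the
free group of rank two. It turns `x y² x` into `z · t⁻¹ z t` and `y x² y` into `t⁻¹ z t · z`, so
it carries the relator of `L` to `[z, z^t]` on the nose and descends to the presented groups.
-/

def PresentedGroup.congrOfFreeGroupEquiv {α β : Type*} {rels : Set (FreeGroup α)}
    {rels' : Set (FreeGroup β)} (e : FreeGroup α ≃* FreeGroup β) (h : e '' rels = rels') :
    PresentedGroup rels ≃* PresentedGroup rels' :=
  QuotientGroup.congr _ _ e <| by
    rw [Subgroup.map_normalClosure _ _ e.surjective, MonoidHom.coe_coe, h]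

def substitutionEquiv : FreeGroup Bool ≃* FreeGroup Bool :=
  MonoidHom.toMulEquiv
    (FreeGroup.lift fun | false => .of false | true => (.of false)⁻¹ * .of true)
    (FreeGroup.lift fun | false => .of false | true => .of false * .of true)
    (FreeGroup.ext_hom _ _ fun b => by cases b <;> simp)
    (FreeGroup.ext_hom _ _ fun b => by cases b <;> simp)

theorem substitutionEquiv_relL : substitutionEquiv relL = relT := by
  simp [substitutionEquiv, relL, relT, pow_two, mul_assoc]

/-- **Statement 8.** `⟨x, y | x y² x = y x² y⟩ ≅ ⟨t, z | z·(t⁻¹ z t) = (t⁻¹ z t)·z⟩`. -/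
theorem L_iso_commuting_conjugate_presentation :
    Nonempty (Lgroup ≃* PresentedGroup ({relT} : Set (FreeGroup Bool))) :=
  ⟨PresentedGroup.congrOfFreeGroupEquiv substitutionEquiv <| by
    rw [Set.image_singleton, substitutionEquiv_relL]⟩
end
end

section
/- There exists an injective group homomorphism from the group L_∞ = ⟨z_i (i ∈ ℤ) | z_i z_{i+1} = z_{i+1} z_i for all i ∈ ℤ⟩ into the one-relator group L = ⟨x, y | x y² x = y x² y⟩. -/
/-!
Send `z_i` to `xⁱ (x y) x⁻ⁱ`. The relation `x y² x = y x² y` says exactly that `x y` commutes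
with `y x`, and conjugating by `x` turns this into the commutation of consecutive images, so
the map is defined. It is injective because it has a left inverse up to the embedding of
`L_∞` into `L_∞ ⋊ ℤ`, where `ℤ` acts by the shift `z_i ↦ z_{i+1}`: sending `x ↦ t` and
`y ↦ t⁻¹ z_0` respects the relation (the images of `x y` and `y x` are `z_0` and `z_{-1}`),
and then `xⁱ (x y) x⁻ⁱ ↦ tⁱ z_0 t⁻ⁱ = z_i`.
-/

noncomputable section

/-- The defining relators of `L_∞ = ⟨z_i (i ∈ ℤ) | z_i z_{i+1} = z_{i+1} z_i⟩`. -/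
def relsLinf : Set (FreeGroup ℤ) :=
  {r | ∃ i : ℤ, r = FreeGroup.of i * FreeGroup.of (i + 1) *
    (FreeGroup.of i)⁻¹ * (FreeGroup.of (i + 1))⁻¹}

open PresentedGroup SemidirectProduct

local notation "L∞" => PresentedGroup relsLinf

section

variable {G : Type*} [Group G]

theorem mul_sq_mul_eq_iff_commute {a b : G} :
    a * b ^ 2 * a = b * a ^ 2 * b ↔ Commute (a * b) (b * a) := by
  simp only [Commute, SemiconjBy, pow_two, mul_assoc]

theorem commute_conj_zpow_succ {a g : G} (h : Commute a (MulAut.conj g a)) (i : ℤ) :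
    Commute (MulAut.conj (g ^ i) a) (MulAut.conj (g ^ (i + 1)) a) := by
  rw [zpow_add_one, map_mul, MulAut.mul_apply]
  exact h.map (MulAut.conj (g ^ i))

end

namespace Linf

variable {G : Type*} [Group G]

theorem commute_of_of_succ (i : ℤ) : Commute (of i : L∞) (of (i + 1)) := by
  rw [← commutatorElement_eq_one_iff_commute, commutatorElement_def]
  have h := PresentedGroup.one_of_mem (rels := relsLinf) ⟨i, rfl⟩
  simp only [map_mul, map_inv] at h
  exact h

def lift (g : ℤ → G) (hg : ∀ i, Commute (g i) (g (i + 1))) : L∞ →* G :=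
  toGroup (f := g) <| by
    rintro _ ⟨i, rfl⟩
    simpa [commutatorElement_def] using commutatorElement_eq_one_iff_commute.mpr (hg i)

@[simp]
theorem lift_of (g : ℤ → G) (hg : ∀ i, Commute (g i) (g (i + 1))) (i : ℤ) :
    lift g hg (of i) = g i :=
  toGroup.of _

def shift (n : ℤ) : L∞ →* L∞ :=
  lift (fun i => of (i + n)) fun i => by
    simpa only [add_right_comm] using commute_of_of_succ (i + n)

@[simp]
theorem shift_of (n i : ℤ) : shift n (of i) = of (i + n) :=
  lift_of ..

theorem shift_zero : shift 0 = MonoidHom.id L∞ :=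
  PresentedGroup.ext fun i => by simp

theorem shift_add (m n : ℤ) : shift (m + n) = (shift m).comp (shift n) :=
  PresentedGroup.ext fun i => by simp [add_assoc, add_comm n]

def shiftAction : Multiplicative ℤ →* MulAut L∞ where
  toFun n := (shift n.toAdd).toMulEquiv (shift (-n.toAdd))
    (by rw [← shift_add, neg_add_cancel, shift_zero])
    (by rw [← shift_add, add_neg_cancel, shift_zero])
  map_one' := MulEquiv.ext fun w => by simp [shift_zero]
  map_mul' m n := MulEquiv.ext fun w => by simp [shift_add]

theorem shiftAction_ofAdd_of (n i : ℤ) : shiftAction (.ofAdd n) (of i) = of (i + n) :=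
  shift_of n i

end Linf

namespace Lgroup

variable {G : Type*} [Group G]

def x : Lgroup := of false

def y : Lgroup := of true

theorem commute_x_mul_y_y_mul_x : Commute (x * y) (y * x) := by
  rw [← mul_sq_mul_eq_iff_commute, ← mul_inv_eq_one]
  exact PresentedGroup.one_of_mem (rels := ({relL} : Set (FreeGroup Bool))) rfl

def lift (a b : G) (h : Commute (a * b) (b * a)) : Lgroup →* G :=
  toGroup (f := fun i => cond i b a) <| by
    rintro _ rfl
    simp only [relL, map_mul, map_inv, map_pow, FreeGroup.lift_apply_of, cond_true, cond_false]
    exact mul_inv_eq_one.mpr (mul_sq_mul_eq_iff_commute.mpr h)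

@[simp]
theorem lift_x (a b : G) (h : Commute (a * b) (b * a)) : lift a b h x = a :=
  toGroup.of _

@[simp]
theorem lift_y (a b : G) (h : Commute (a * b) (b * a)) : lift a b h y = b :=
  toGroup.of _

theorem commute_x_mul_y_conj_x : Commute (x * y) (MulAut.conj x (x * y)) := by
  simpa [mul_assoc] using commute_x_mul_y_y_mul_x.symm.conj x

end Lgroup

def Linf.toLgroup : L∞ →* Lgroup :=
  Linf.lift (fun i => MulAut.conj (Lgroup.x ^ i) (Lgroup.x * Lgroup.y))
    (commute_conj_zpow_succ Lgroup.commute_x_mul_y_conj_x)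

abbrev Linf.Semidirect : Type := L∞ ⋊[Linf.shiftAction] Multiplicative ℤ

def Lgroup.toSemidirect : Lgroup →* Linf.Semidirect :=
  Lgroup.lift (inr (.ofAdd 1)) ((inr (.ofAdd 1))⁻¹ * inl (of 0)) <| by
    have hyx : (inr (.ofAdd 1))⁻¹ * inl (of 0) * inr (.ofAdd 1) =
        (inl (of (-1)) : Linf.Semidirect) := by
      rw [← map_inv, ← inl_aut_inv, ← map_inv, ← ofAdd_neg, Linf.shiftAction_ofAdd_of, zero_add]
    rw [mul_inv_cancel_left, hyx]
    simpa using ((Linf.commute_of_of_succ (-1)).map inl).symm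

theorem Lgroup.toSemidirect_x_mul_y : toSemidirect (x * y) = inl (of 0) := by
  simp [toSemidirect]

theorem Lgroup.toSemidirect_comp_toLgroup :
    Lgroup.toSemidirect.comp Linf.toLgroup = inl :=
  PresentedGroup.ext fun i => by
    have hpow : (inr (.ofAdd 1) : Linf.Semidirect) ^ i = inr (.ofAdd i) := by
      rw [← map_zpow, ← ofAdd_zsmul, smul_eq_mul, mul_one]
    rw [MonoidHom.comp_apply, Linf.toLgroup, Linf.lift_of, MulAut.conj_apply, map_mul, map_mul,
      toSemidirect_x_mul_y, map_inv, map_zpow, toSemidirect, lift_x, hpow, ← map_inv, ← inl_aut,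
      Linf.shiftAction_ofAdd_of, zero_add]

/-- **Statement 9.** The group `L_∞` embeds into the one-relator group
`L = ⟨x, y | x y² x = y x² y⟩`. -/
theorem Linf_embeds_in_L :
    ∃ φ : PresentedGroup relsLinf →* Lgroup, Function.Injective φ := by
  refine ⟨Linf.toLgroup, Function.Injective.of_comp (f := Lgroup.toSemidirect) ?_⟩
  rw [← MonoidHom.coe_comp, Lgroup.toSemidirect_comp_toLgroup]
  exact inl_injective
end
end
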